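/- Let H₁, H₂, H₃ be complex Hilbert spaces, let T₁ : H₁ → H₂ be a continuous linear operator, and let T₂ be a closed densely defined unbounded linear operator from H₁ to H₃ (a linear map defined on a dense subspace Dom(T₂) ⊆ H₁ whose graph is closed). Let F be a closed subspace of H₂, and suppose T₁(Ker(T₂)) = F, where Ker(T₂) = { h ∈ Dom(T₂) : T₂ h = 0 }. Then there exists a constant c > 0 such that c‖u‖ ≤ ‖T₁* u + T₂* v‖ for every u ∈ F and every v ∈ Dom(T₂*) that is orthogonal to Ker(T₂*) = { w ∈ Dom(T₂*) : T₂* w = 0 }, where T₁* is the Hilbert adjoint of T₁ and T₂* is the adjoint of T₂. -/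

import Mathlib

open scoped InnerProductSpace

/-!
Let `K = Ker T₂`, closed because `T₂` is. Since `T₁` maps the Banach space `K` onto the Banach
space `F`, the open mapping theorem gives `C > 0` such that every `u ∈ F` is `T₁ h` for some
`h ∈ K` with `‖h‖ ≤ C ‖u‖`. As `T₂* v ⟂ Ker T₂`, pairing `T₁* u + T₂* v` with `h` gives
`⟪u, T₁ h⟫ = ‖u‖²`, so `‖u‖² ≤ ‖T₁* u + T₂* v‖ C ‖u‖`, and `c = C⁻¹` works.
-/

namespace LinearPMap

section Kernel

variable {R E F : Type*} [CommRing R] [AddCommGroup E] [Module R E] [AddCommGroup F] [Module R F]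

def ker (T : E →ₗ.[R] F) : Submodule R E :=
  T.graph.comap (LinearMap.inl R E F)

theorem mem_ker_iff {T : E →ₗ.[R] F} {x : E} :
    x ∈ T.ker ↔ ∃ hx : x ∈ T.domain, T ⟨x, hx⟩ = 0 := by
  simp only [ker, Submodule.mem_comap, LinearMap.inl_apply, mem_graph_iff]
  constructor
  · rintro ⟨y, rfl, hy⟩
    exact ⟨y.2, hy⟩
  · rintro ⟨hx, hx0⟩
    exact ⟨⟨x, hx⟩, rfl, hx0⟩

theorem coe_ker (T : E →ₗ.[R] F) :
    (T.ker : Set E) = {x | ∃ hx : x ∈ T.domain, T ⟨x, hx⟩ = 0} :=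
  Set.ext fun _ => mem_ker_iff

theorem IsClosed.isClosed_ker [TopologicalSpace E] [TopologicalSpace F] {T : E →ₗ.[R] F}
    (hT : T.IsClosed) : _root_.IsClosed (T.ker : Set E) :=
  hT.preimage (continuous_id.prodMk continuous_const)

end Kernel

variable {𝕜 E F : Type*} [RCLike 𝕜] [NormedAddCommGroup E] [InnerProductSpace 𝕜 E]
  [CompleteSpace E] [NormedAddCommGroup F] [InnerProductSpace 𝕜 F]

theorem inner_adjoint_eq_zero_of_mem_ker {T : E →ₗ.[𝕜] F} (hT : Dense (T.domain : Set E))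
    (v : T†.domain) {x : E} (hx : x ∈ T.ker) : ⟪T† v, x⟫_𝕜 = 0 := by
  obtain ⟨hxT, hx0⟩ := mem_ker_iff.mp hx
  simpa [hx0] using adjoint_isFormalAdjoint hT v ⟨x, hxT⟩

end LinearPMap

theorem ContinuousLinearMap.exists_preimage_mem_norm_le_of_image_eq {𝕜 E F : Type*}
    [NontriviallyNormedField 𝕜] [NormedAddCommGroup E] [NormedSpace 𝕜 E]
    [NormedAddCommGroup F] [NormedSpace 𝕜 F] (A : E →L[𝕜] F) {K : Submodule 𝕜 E}
    {G : Submodule 𝕜 F} (hK : IsComplete (K : Set E)) (hG : IsComplete (G : Set F))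
    (hKG : A '' K = G) :
    ∃ C > 0, ∀ y ∈ G, ∃ x ∈ K, A x = y ∧ ‖x‖ ≤ C * ‖y‖ := by
  have : CompleteSpace K := hK.completeSpace_coe
  have : CompleteSpace G := hG.completeSpace_coe
  have hmaps (x : K) : A x ∈ G := hKG.subset ⟨x, x.2, rfl⟩
  let A' : K →L[𝕜] G := (A.comp K.subtypeL).codRestrict G hmaps
  have hA' : Function.Surjective A' := by
    rintro ⟨y, hy⟩
    obtain ⟨x, hx, rfl⟩ := (hKG ▸ hy : y ∈ A '' K)
    exact ⟨⟨x, hx⟩, rfl⟩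
  obtain ⟨C, hC, hpre⟩ := A'.exists_preimage_norm_le hA'
  refine ⟨C, hC, fun y hy => ?_⟩
  obtain ⟨x, hx, hxy⟩ := hpre ⟨y, hy⟩
  exact ⟨x, x.2, congrArg Subtype.val hx, hxy⟩

theorem le_mul_norm_of_sq_le_norm_inner {𝕜 E : Type*} [RCLike 𝕜] [NormedAddCommGroup E]
    [InnerProductSpace 𝕜 E] {w h : E} {r C : ℝ} (hC : 0 ≤ C) (hr : r ^ 2 ≤ ‖⟪w, h⟫_𝕜‖)
    (hh : ‖h‖ ≤ C * r) : r ≤ C * ‖w‖ := by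
  have hsq : r * r ≤ C * ‖w‖ * r := by
    calc r * r = r ^ 2 := (sq r).symm
      _ ≤ ‖w‖ * ‖h‖ := hr.trans (norm_inner_le_norm w h)
      _ ≤ ‖w‖ * (C * r) := by gcongr
      _ = C * ‖w‖ * r := by ring
  rcases le_or_gt r 0 with hr0 | hr0
  · exact hr0.trans (by positivity)
  · exact le_of_mul_le_mul_right hsq hr0

theorem skoda_functional_lemma_necessity_general
    {H₁ H₂ H₃ : Type*}
    [NormedAddCommGroup H₁] [InnerProductSpace ℂ H₁] [CompleteSpace H₁]
    [NormedAddCommGroup H₂] [InnerProductSpace ℂ H₂] [CompleteSpace H₂]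
    [NormedAddCommGroup H₃] [InnerProductSpace ℂ H₃]
    (T₁ : H₁ →L[ℂ] H₂) (T₂ : H₁ →ₗ.[ℂ] H₃)
    (hdense : Dense (T₂.domain : Set H₁)) (hclosed : T₂.IsClosed)
    (F : Submodule ℂ H₂) (hF : IsClosed (F : Set H₂))
    (hsurj : T₁ '' {x : H₁ | ∃ hx : x ∈ T₂.domain, T₂ ⟨x, hx⟩ = 0} = (F : Set H₂)) :
    ∃ c : ℝ, 0 < c ∧ ∀ u ∈ F, ∀ v : T₂.adjoint.domain,
      (∀ w : T₂.adjoint.domain, T₂.adjoint w = 0 → (inner ℂ (v : H₃) (w : H₃) : ℂ) = 0) →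
      c * ‖u‖ ≤ ‖ContinuousLinearMap.adjoint T₁ u + T₂.adjoint v‖ := by
  obtain ⟨C, hC, hpre⟩ := T₁.exists_preimage_mem_norm_le_of_image_eq
    hclosed.isClosed_ker.isComplete hF.isComplete (T₂.coe_ker ▸ hsurj)
  refine ⟨C⁻¹, inv_pos.mpr hC, fun u hu v _ => ?_⟩
  obtain ⟨h, hker, hhu, hh⟩ := hpre u hu
  rw [inv_mul_le_iff₀ hC]
  refine le_mul_norm_of_sq_le_norm_inner (𝕜 := ℂ) hC.le (le_of_eq ?_) hh
  rw [inner_add_left, T₂.inner_adjoint_eq_zero_of_mem_ker hdense v hker, add_zero,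
    ContinuousLinearMap.adjoint_inner_left, hhu, inner_self_eq_norm_sq_to_K, norm_pow,
    RCLike.norm_ofReal, abs_norm]

/-- **Skoda's functional-analysis lemma (necessity).**
If `T₁(Ker T₂) = F` for a closed subspace `F`, then there is `c > 0` with
`c‖u‖ ≤ ‖T₁* u + T₂* v‖` for all `u ∈ F` and all `v ∈ Dom(T₂*)` orthogonal to
`Ker(T₂*)`. -/
theorem skoda_functional_lemma_necessity
    {H₁ H₂ H₃ : Type*}
    [NormedAddCommGroup H₁] [InnerProductSpace ℂ H₁] [CompleteSpace H₁]
    [NormedAddCommGroup H₂] [InnerProductSpace ℂ H₂] [CompleteSpace H₂]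
    [NormedAddCommGroup H₃] [InnerProductSpace ℂ H₃] [CompleteSpace H₃]
    (T₁ : H₁ →L[ℂ] H₂) (T₂ : H₁ →ₗ.[ℂ] H₃)
    (hdense : Dense (T₂.domain : Set H₁)) (hclosed : T₂.IsClosed)
    (F : Submodule ℂ H₂) (hF : IsClosed (F : Set H₂))
    (hsurj : T₁ '' {x : H₁ | ∃ hx : x ∈ T₂.domain, T₂ ⟨x, hx⟩ = 0} = (F : Set H₂)) :
    ∃ c : ℝ, 0 < c ∧ ∀ u ∈ F, ∀ v : T₂.adjoint.domain,
      (∀ w : T₂.adjoint.domain, T₂.adjoint w = 0 → (inner ℂ (v : H₃) (w : H₃) : ℂ) = 0) →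
      c * ‖u‖ ≤ ‖ContinuousLinearMap.adjoint T₁ u + T₂.adjoint v‖ :=
  skoda_functional_lemma_necessity_general T₁ T₂ hdense hclosed F hF hsurj
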